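/- arXiv:2402.12304 — 2 statements merged into one kernel-verified Lean document; each statement's English description precedes it below -/
import Mathlib

section
/- One-step quadratic error bound for the Picard–Newton iteration (the key estimate in the proof of Theorem 3.2): suppose α := Mν⁻²‖f‖ < 1, let u ∈ V be a weak NSE solution, let uₖ ∈ V, let û_{k+1} be a Picard update of uₖ, and let u_{k+1} be a Newton update of û_{k+1}. Then ‖u − u_{k+1}‖ ≤ Mν⁻¹α²(1−α)⁻¹ ‖u − uₖ‖². -/
/-!
Testing the weak formulations against the errors and using `b z w w = 0` gives the error equations
`ν ‖u - û‖² = -b(u - uₖ, u, u - û)` for the Picard step and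
`ν ‖u - u'‖² = -b(u - u', û, u - u') - b(u - û, u - û, u - u')` for the Newton step.
Together with the a priori bounds `‖u‖, ‖û‖ ≤ ‖f‖ / ν`, the first makes the Picard step contract the
error by `α`, and the second makes the Newton step square it, with constant `M / ((1 - α) ν)`.
-/

open scoped RealInnerProductSpace

lemma le_div_of_mul_sq_le_mul {a c ν : ℝ} (hν : 0 < ν) (ha : 0 ≤ a) (hc : 0 ≤ c)
    (h : ν * a ^ 2 ≤ c * a) : a ≤ c / ν := by
  rw [le_div_iff₀ hν]
  rcases ha.eq_or_lt with rfl | ha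
  · simpa using hc
  · exact le_of_mul_le_mul_right (by linarith) ha

section PicardNewton

variable {V : Type*} [NormedAddCommGroup V] [InnerProductSpace ℝ V]
  {b : V →ₗ[ℝ] V →ₗ[ℝ] V →ₗ[ℝ] ℝ} {M ν : ℝ} {f : V →L[ℝ] ℝ}

lemma norm_le_of_linearized_eq (hskew : ∀ z w : V, b z w w = 0) (hν : 0 < ν) {w z : V}
    (hz : ∀ v : V, ν * ⟪z, v⟫ + b w z v = f v) : ‖z‖ ≤ ‖f‖ / ν := by
  have h := hz z
  rw [hskew, add_zero, real_inner_self_eq_norm_sq] at h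
  refine le_div_of_mul_sq_le_mul hν (norm_nonneg z) (norm_nonneg f) (h ▸ ?_)
  exact (le_abs_self (f z)).trans (f.le_opNorm z)

lemma picard_error_eq (hskew : ∀ z w : V, b z w w = 0) {u uk uhat : V}
    (hNSE : ∀ v : V, ν * ⟪u, v⟫ + b u u v = f v)
    (hPicard : ∀ v : V, ν * ⟪uhat, v⟫ + b uk uhat v = f v) :
    ν * ‖u - uhat‖ ^ 2 = -b (u - uk) u (u - uhat) := by
  have h1 := hNSE (u - uhat)
  have h2 := hPicard (u - uhat)
  have h3 := hskew uk (u - uhat)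
  rw [← real_inner_self_eq_norm_sq]
  simp only [map_sub, LinearMap.sub_apply, inner_sub_left, inner_sub_right] at *
  linarith [real_inner_comm u uhat]

lemma newton_error_eq (hskew : ∀ z w : V, b z w w = 0) {u uhat u' : V}
    (hNSE : ∀ v : V, ν * ⟪u, v⟫ + b u u v = f v)
    (hNewton : ∀ v : V, ν * ⟪u', v⟫ + b uhat u' v + b u' uhat v - b uhat uhat v = f v) :
    ν * ‖u - u'‖ ^ 2 = -b (u - u') uhat (u - u') - b (u - uhat) (u - uhat) (u - u') := by
  have h1 := hNSE (u - u')
  have h2 := hNewton (u - u')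
  have h3 := hskew uhat (u - u')
  rw [← real_inner_self_eq_norm_sq]
  simp only [map_sub, LinearMap.sub_apply, inner_sub_left, inner_sub_right] at *
  linarith [real_inner_comm u u']

lemma picard_error_le (hskew : ∀ z w : V, b z w w = 0) (hM : 0 ≤ M)
    (hbound : ∀ z w v : V, |b z w v| ≤ M * ‖z‖ * ‖w‖ * ‖v‖) (hν : 0 < ν) {u uk uhat : V}
    (hNSE : ∀ v : V, ν * ⟪u, v⟫ + b u u v = f v)
    (hPicard : ∀ v : V, ν * ⟪uhat, v⟫ + b uk uhat v = f v) :
    ‖u - uhat‖ ≤ M * ‖u‖ * ‖u - uk‖ / ν := by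
  refine le_div_of_mul_sq_le_mul hν (norm_nonneg _) (by positivity) ?_
  rw [picard_error_eq hskew hNSE hPicard]
  linarith [neg_le_abs (b (u - uk) u (u - uhat)), hbound (u - uk) u (u - uhat)]

lemma newton_error_le (hskew : ∀ z w : V, b z w w = 0) (hM : 0 ≤ M)
    (hbound : ∀ z w v : V, |b z w v| ≤ M * ‖z‖ * ‖w‖ * ‖v‖) {u uhat u' : V}
    (hNSE : ∀ v : V, ν * ⟪u, v⟫ + b u u v = f v)
    (hNewton : ∀ v : V, ν * ⟪u', v⟫ + b uhat u' v + b u' uhat v - b uhat uhat v = f v)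
    (hcoer : M * ‖uhat‖ < ν) :
    ‖u - u'‖ ≤ M * ‖u - uhat‖ ^ 2 / (ν - M * ‖uhat‖) := by
  refine le_div_of_mul_sq_le_mul (sub_pos.2 hcoer) (norm_nonneg _) (by positivity) ?_
  have h1 := hbound (u - u') uhat (u - u')
  have h2 := hbound (u - uhat) (u - uhat) (u - u')
  have h3 := newton_error_eq hskew hNSE hNewton
  linarith [neg_le_abs (b (u - u') uhat (u - u')), neg_le_abs (b (u - uhat) (u - uhat) (u - u'))]

end PicardNewton

/-- One-step quadratic error bound for the Picard–Newton iteration (key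
estimate in the proof of Theorem 3.2): if `α := Mν⁻²‖f‖ < 1`, `u` is a weak
NSE solution, `uhat` is a Picard update of `uk`, and `u'` is a Newton update of
`uhat`, then `‖u − u'‖ ≤ Mν⁻¹α²(1−α)⁻¹‖u − uk‖²`. -/
theorem picard_newton_one_step_quadratic
    {V : Type*} [NormedAddCommGroup V] [InnerProductSpace ℝ V]
    (b : V →ₗ[ℝ] V →ₗ[ℝ] V →ₗ[ℝ] ℝ)
    (hskew : ∀ z w : V, b z w w = 0)
    (M : ℝ) (hM : 0 < M)
    (hbound : ∀ z w v : V, |b z w v| ≤ M * ‖z‖ * ‖w‖ * ‖v‖)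
    (f : V →L[ℝ] ℝ) (ν : ℝ) (hν : 0 < ν)
    (α : ℝ) (hα : α = M * ν⁻¹ ^ 2 * ‖f‖) (hα1 : α < 1)
    (u uk uhat u' : V)
    (hNSE : ∀ v : V, ν * ⟪u, v⟫ + b u u v = f v)
    (hPicard : ∀ v : V, ν * ⟪uhat, v⟫ + b uk uhat v = f v)
    (hNewton : ∀ v : V, ν * ⟪u', v⟫ + b uhat u' v + b u' uhat v - b uhat uhat v = f v) :
    ‖u - u'‖ ≤ M * ν⁻¹ * α ^ 2 * (1 - α)⁻¹ * ‖u - uk‖ ^ 2 := by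
  have hα0 : 0 ≤ α := by rw [hα]; positivity
  have hαν : M * (‖f‖ / ν) = α * ν := by rw [hα]; field_simp
  have hMu : M * ‖u‖ ≤ α * ν :=
    hαν ▸ mul_le_mul_of_nonneg_left (norm_le_of_linearized_eq hskew hν hNSE) hM.le
  have hMuhat : M * ‖uhat‖ ≤ α * ν :=
    hαν ▸ mul_le_mul_of_nonneg_left (norm_le_of_linearized_eq hskew hν hPicard) hM.le
  have hpicard : ‖u - uhat‖ ≤ α * ‖u - uk‖ := by
    refine (picard_error_le hskew hM.le hbound hν hNSE hPicard).trans ?_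
    rw [div_le_iff₀ hν]
    nlinarith [norm_nonneg (u - uk)]
  have hnewton := newton_error_le hskew hM.le hbound hNSE hNewton (by nlinarith)
  calc ‖u - u'‖ ≤ M * ‖u - uhat‖ ^ 2 / (ν - M * ‖uhat‖) := hnewton
    _ ≤ M * (α * ‖u - uk‖) ^ 2 / ((1 - α) * ν) := by
        gcongr
        linarith
    _ = M * ν⁻¹ * α ^ 2 * (1 - α)⁻¹ * ‖u - uk‖ ^ 2 := by
        field_simp
end

section
/- Theorem 3.2 (quadratic convergence of Picard–Newton under the uniqueness condition): suppose α := Mν⁻²‖f‖ < 1, let u ∈ V be a weak NSE solution, and let (uₖ), (ûₖ) be Picard–Newton iterates from an initial iterate u₀ ∈ V (for every k ≥ 0, û_{k+1} is a Picard update of uₖ and u_{k+1} is a Newton update of û_{k+1}). If the initial iterate satisfies Mν⁻¹α²(1−α)⁻¹‖u − u₀‖ < 1, then for every k ≥ 0, ‖u − u_{k+1}‖ ≤ Mν⁻¹α²(1−α)⁻¹‖u − uₖ‖², and ‖u − uₖ‖ → 0 as k → ∞; in particular the iteration converges quadratically to u. -/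
open scoped RealInnerProductSpace

/-!
Subtracting the equation of an iterate from the NSE and testing with the error `e` kills the
term `b z e e`, which leaves an energy estimate for `‖e‖`. For the Picard step this gives
`‖u - û‖ ≤ Mν⁻¹‖u‖‖u - w‖ ≤ α‖u - w‖`, using the a priori bound `ν‖u‖ ≤ ‖f‖`. For the Newton step
the only non-quadratic term is `b e û e`, which the same a priori bound for the Picard iterate `û`
absorbs into the left side at the cost of the factor `(1 - α)⁻¹`. Composing the two steps gives
`eₖ₊₁ ≤ C eₖ²`; once `C e₀ < 1`, induction gives `C eₖ ≤ C e₀ =: r < 1`, hence `eₖ ≤ rᵏ e₀ → 0`.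
-/

lemma le_of_mul_sq_le_mul {a n K : ℝ} (hn : 0 ≤ n) (hK : 0 ≤ K) (h : a * n ^ 2 ≤ K * n) :
    a * n ≤ K := by
  rcases hn.eq_or_lt with rfl | hpos
  · simpa using hK
  · exact le_of_mul_le_mul_right (by linarith [h]) hpos

lemma tendsto_zero_of_le_mul_sq {e : ℕ → ℝ} {C : ℝ} (he : ∀ k, 0 ≤ e k) (hC : 0 ≤ C)
    (hrec : ∀ k, e (k + 1) ≤ C * e k ^ 2) (h0 : C * e 0 < 1) :
    Filter.Tendsto e Filter.atTop (nhds 0) := by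
  set r := C * e 0
  have hr : 0 ≤ r := mul_nonneg hC (he 0)
  have hstep : ∀ k, e (k + 1) ≤ C * e k * e k := fun k => by linarith [hrec k]
  have hsmall : ∀ k, C * e k ≤ r := by
    intro k
    induction k with
    | zero => rfl
    | succ k ih =>
      calc C * e (k + 1) ≤ C * (C * e k * e k) := mul_le_mul_of_nonneg_left (hstep k) hC
        _ = (C * e k) * (C * e k) := by ring
        _ ≤ r * r := mul_le_mul ih ih (mul_nonneg hC (he k)) hr
        _ ≤ r := mul_le_of_le_one_left hr h0.le
  have hgeom : ∀ k, e k ≤ r ^ k * e 0 := by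
    intro k
    induction k with
    | zero => simp
    | succ k ih =>
      calc e (k + 1) ≤ C * e k * e k := hstep k
        _ ≤ r * (r ^ k * e 0) := mul_le_mul (hsmall k) ih (he k) hr
        _ = r ^ (k + 1) * e 0 := by ring
  have hlim := (tendsto_pow_atTop_nhds_zero_of_lt_one hr h0).mul_const (e 0)
  rw [zero_mul] at hlim
  exact squeeze_zero he hgeom hlim

section PicardNewton

variable {V : Type*} [NormedAddCommGroup V] [InnerProductSpace ℝ V]
  (b : V →ₗ[ℝ] V →ₗ[ℝ] V →ₗ[ℝ] ℝ) (f : V →L[ℝ] ℝ) (ν : ℝ)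

def IsNSESolution (u : V) : Prop :=
  ∀ v, ν * ⟪u, v⟫ + b u u v = f v

def IsPicardUpdate (w û : V) : Prop :=
  ∀ v, ν * ⟪û, v⟫ + b w û v = f v

def IsNewtonUpdate (û u' : V) : Prop :=
  ∀ v, ν * ⟪u', v⟫ + b û u' v + b u' û v - b û û v = f v

variable {b f ν}

lemma IsNSESolution.isPicardUpdate {u : V} (h : IsNSESolution b f ν u) :
    IsPicardUpdate b f ν u u :=
  h

lemma IsPicardUpdate.norm_le (hskew : ∀ z w : V, b z w w = 0) (hν : 0 < ν) {w û : V}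
    (h : IsPicardUpdate b f ν w û) : ‖û‖ ≤ ν⁻¹ * ‖f‖ := by
  have henergy := h û
  rw [hskew, real_inner_self_eq_norm_sq, add_zero] at henergy
  have hf : f û ≤ ‖f‖ * ‖û‖ := (le_abs_self _).trans (f.le_opNorm û)
  rw [le_inv_mul_iff₀ hν]
  exact le_of_mul_sq_le_mul (norm_nonneg _) (norm_nonneg _) (by linarith)

variable {M α : ℝ}

lemma IsPicardUpdate.norm_sub_le (hskew : ∀ z w : V, b z w w = 0)
    (hbound : ∀ z w v : V, |b z w v| ≤ M * ‖z‖ * ‖w‖ * ‖v‖) (hM : 0 ≤ M) (hν : 0 < ν)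
    (hα : α = M * ν⁻¹ ^ 2 * ‖f‖) {u w û : V} (hsol : IsNSESolution b f ν u)
    (h : IsPicardUpdate b f ν w û) : ‖u - û‖ ≤ α * ‖u - w‖ := by
  have henergy : ν * ‖u - û‖ ^ 2 = -b (u - w) u (u - û) := by
    have hu := hsol (u - û)
    have hû := h (u - û)
    have hz := hskew w (u - û)
    rw [← real_inner_self_eq_norm_sq, inner_sub_left, mul_sub]
    simp only [map_sub, LinearMap.sub_apply] at hu hû hz ⊢
    linarith
  have hK : ν * ‖u - û‖ ≤ M * ‖u - w‖ * ‖u‖ := by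
    refine le_of_mul_sq_le_mul (norm_nonneg _) (by positivity) ?_
    rw [henergy]
    exact (neg_le_abs _).trans (hbound _ _ _)
  have hu := hsol.isPicardUpdate.norm_le hskew hν
  calc ‖u - û‖ ≤ ν⁻¹ * (M * ‖u - w‖ * ‖u‖) := (le_inv_mul_iff₀ hν).2 hK
    _ ≤ ν⁻¹ * (M * ‖u - w‖ * (ν⁻¹ * ‖f‖)) := by gcongr
    _ = α * ‖u - w‖ := by rw [hα]; ring

lemma IsNewtonUpdate.norm_sub_le (hskew : ∀ z w : V, b z w w = 0)
    (hbound : ∀ z w v : V, |b z w v| ≤ M * ‖z‖ * ‖w‖ * ‖v‖) (hM : 0 ≤ M) (hν : 0 < ν)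
    (hα : α = M * ν⁻¹ ^ 2 * ‖f‖) (hα1 : α < 1) {u û u' : V} (hsol : IsNSESolution b f ν u)
    (hû : ‖û‖ ≤ ν⁻¹ * ‖f‖) (h : IsNewtonUpdate b f ν û u') :
    ‖u - u'‖ ≤ M * ν⁻¹ * (1 - α)⁻¹ * ‖u - û‖ ^ 2 := by
  set e := u - u'
  set ê := u - û
  have henergy : ν * ‖e‖ ^ 2 = -b ê ê e - b e û e := by
    have hu := hsol e
    have hu' := h e
    have hz := hskew û e
    rw [← real_inner_self_eq_norm_sq, inner_sub_left, mul_sub]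
    simp only [e, ê, map_sub, LinearMap.sub_apply] at hu hu' hz ⊢
    linarith
  have hquad : -b ê ê e ≤ M * ‖ê‖ * ‖ê‖ * ‖e‖ := (neg_le_abs _).trans (hbound _ _ _)
  have hlin : -b e û e ≤ ν * α * ‖e‖ ^ 2 :=
    calc -b e û e ≤ M * ‖e‖ * ‖û‖ * ‖e‖ := (neg_le_abs _).trans (hbound _ _ _)
      _ ≤ M * ‖e‖ * (ν⁻¹ * ‖f‖) * ‖e‖ := by gcongr
      _ = ν * α * ‖e‖ ^ 2 := by rw [hα]; field_simp
  have hpos : 0 < ν * (1 - α) := mul_pos hν (by linarith)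
  have hK : ν * (1 - α) * ‖e‖ ≤ M * ‖ê‖ ^ 2 :=
    le_of_mul_sq_le_mul (norm_nonneg _) (by positivity) (by nlinarith)
  calc ‖e‖ ≤ (ν * (1 - α))⁻¹ * (M * ‖ê‖ ^ 2) := (le_inv_mul_iff₀ hpos).2 hK
    _ = M * ν⁻¹ * (1 - α)⁻¹ * ‖ê‖ ^ 2 := by rw [mul_inv]; ring

lemma IsNewtonUpdate.norm_sub_le_sq_of_isPicardUpdate (hskew : ∀ z w : V, b z w w = 0)
    (hbound : ∀ z w v : V, |b z w v| ≤ M * ‖z‖ * ‖w‖ * ‖v‖) (hM : 0 ≤ M) (hν : 0 < ν)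
    (hα : α = M * ν⁻¹ ^ 2 * ‖f‖) (hα1 : α < 1) {u w û u' : V} (hsol : IsNSESolution b f ν u)
    (hû : IsPicardUpdate b f ν w û) (h : IsNewtonUpdate b f ν û u') :
    ‖u - u'‖ ≤ M * ν⁻¹ * α ^ 2 * (1 - α)⁻¹ * ‖u - w‖ ^ 2 := by
  have hpicard := hû.norm_sub_le hskew hbound hM hν hα hsol
  calc ‖u - u'‖ ≤ M * ν⁻¹ * (1 - α)⁻¹ * ‖u - û‖ ^ 2 :=
        h.norm_sub_le hskew hbound hM hν hα hα1 hsol (hû.norm_le hskew hν)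
    _ ≤ M * ν⁻¹ * (1 - α)⁻¹ * (α * ‖u - w‖) ^ 2 := by
        have : 0 < 1 - α := by linarith
        gcongr
    _ = M * ν⁻¹ * α ^ 2 * (1 - α)⁻¹ * ‖u - w‖ ^ 2 := by ring

end PicardNewton

/-- Theorem 3.2 (quadratic convergence of Picard–Newton under the uniqueness
condition): if `α := Mν⁻²‖f‖ < 1`, `u` is a weak NSE solution, the iterates
`(u k)`, `(uhat k)` follow the Picard–Newton iteration, and the initial iterate
satisfies `Mν⁻¹α²(1−α)⁻¹‖u − u 0‖ < 1`, then for every `k`,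
`‖u − u (k+1)‖ ≤ Mν⁻¹α²(1−α)⁻¹‖u − u k‖²` and `‖u − u k‖ → 0`. -/
theorem picard_newton_quadratic_convergence
    {V : Type*} [NormedAddCommGroup V] [InnerProductSpace ℝ V]
    (b : V →ₗ[ℝ] V →ₗ[ℝ] V →ₗ[ℝ] ℝ)
    (hskew : ∀ z w : V, b z w w = 0)
    (M : ℝ) (hM : 0 < M)
    (hbound : ∀ z w v : V, |b z w v| ≤ M * ‖z‖ * ‖w‖ * ‖v‖)
    (f : V →L[ℝ] ℝ) (ν : ℝ) (hν : 0 < ν)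
    (α : ℝ) (hα : α = M * ν⁻¹ ^ 2 * ‖f‖) (hα1 : α < 1)
    (u₀ : V) (u uhat : ℕ → V) (hu0 : u 0 = u₀)
    (usol : V)
    (hNSE : ∀ v : V, ν * ⟪usol, v⟫ + b usol usol v = f v)
    (hPicard : ∀ k : ℕ, ∀ v : V,
      ν * ⟪uhat (k + 1), v⟫ + b (u k) (uhat (k + 1)) v = f v)
    (hNewton : ∀ k : ℕ, ∀ v : V,
      ν * ⟪u (k + 1), v⟫ + b (uhat (k + 1)) (u (k + 1)) v
        + b (u (k + 1)) (uhat (k + 1)) v - b (uhat (k + 1)) (uhat (k + 1)) v = f v)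
    (hinit : M * ν⁻¹ * α ^ 2 * (1 - α)⁻¹ * ‖usol - u₀‖ < 1) :
    (∀ k : ℕ,
      ‖usol - u (k + 1)‖ ≤ M * ν⁻¹ * α ^ 2 * (1 - α)⁻¹ * ‖usol - u k‖ ^ 2)
    ∧ Filter.Tendsto (fun k : ℕ => ‖usol - u k‖) Filter.atTop (nhds 0) := by
  have hrec : ∀ k, ‖usol - u (k + 1)‖ ≤ M * ν⁻¹ * α ^ 2 * (1 - α)⁻¹ * ‖usol - u k‖ ^ 2 :=
    fun k => IsNewtonUpdate.norm_sub_le_sq_of_isPicardUpdate hskew hbound hM.le hν hα hα1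
      hNSE (hPicard k) (hNewton k)
  have hC : 0 ≤ M * ν⁻¹ * α ^ 2 * (1 - α)⁻¹ := by
    have : 0 < 1 - α := by linarith
    positivity
  refine ⟨hrec, tendsto_zero_of_le_mul_sq (fun k => norm_nonneg _) hC hrec ?_⟩
  rwa [hu0]
end
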